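/- Let m ≥ 1, k ≥ 1 and let h : Z_{2m+1} → Z_k be a homomorphism. Then k is odd, h(0) = 0, and whenever a ≠ b in Z_{2m+1} satisfy h(a) = h(b) one has h(a) = 0. Moreover two homomorphisms h₁, h₂ : Z_{2m+1} → Z_{2m+1} are equal if and only if their images coincide, and the assignment h ↦ image(h) is a bijection from the set of homomorphisms Z_{2m+1} → Z_{2m+1} onto the set of subalgebras of Z_{2m+1} that contain 0. -/

import Mathlib

/-- Sugihara implication on the integers. -/
def SImp (a b : ℤ) : ℤ := if a ≤ b then max (-a) b else min (-a) b

/-- The universe of the Sugihara algebra `Z_{2n+1}`. -/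
def Zodd (n : ℕ) : Set ℤ := {a : ℤ | -(n : ℤ) ≤ a ∧ a ≤ (n : ℤ)}

/-- The universe of the Sugihara algebra `Z_{2n}`. -/
def Zeven (n : ℕ) : Set ℤ := {a : ℤ | (-(n : ℤ) ≤ a ∧ a ≤ (n : ℤ)) ∧ a ≠ 0}

/-- `S` is a subalgebra of (the subset `Z` of) the Sugihara algebra on `ℤ`. -/
def Subalg (Z S : Set ℤ) : Prop :=
  S.Nonempty ∧ S ⊆ Z ∧
    ∀ a ∈ S, ∀ b ∈ S, min a b ∈ S ∧ max a b ∈ S ∧ -a ∈ S ∧ SImp a b ∈ S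

/-- `h` is a homomorphism from `S` to `T` (preserving ∧, ∨, ¬, →). -/
def SHom (S T : Set ℤ) (h : ℤ → ℤ) : Prop :=
  Set.MapsTo h S T ∧
    ∀ a ∈ S, ∀ b ∈ S,
      h (min a b) = min (h a) (h b) ∧ h (max a b) = max (h a) (h b) ∧
      h (-a) = -h a ∧ h (SImp a b) = SImp (h a) (h b)

/-- The universe of the Sugihara algebra `Z_k` for general `k ≥ 1`. -/
def ZS (k : ℕ) : Set ℤ := if k % 2 = 1 then Zodd (k / 2) else Zeven (k / 2)

/-! A homomorphism `h` out of `Z_{2m+1}` is exactly an odd monotone map that is injective away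
from `0`: for `a < b` the implications `a → b = (-a) ∨ b` and `b → a = -(a → b)` are sent to
`h a → h b` and `h b → h a`, which coincide with `|h a|` when `h a = h b`, forcing `h a = 0`.
Hence `h` is determined by its image `I`: it sends `m, m - 1, …` to the positive elements of `I`
in decreasing order and the rest of `[0, m]` to `0`. Conversely this recipe turns every
symmetric `T ∋ 0` into a homomorphism with image `T`. Finally `h 0 = 0` lies in `Z_k`, so `k`
is odd. -/

open Set

section SImp

variable {a b : ℤ}

lemma SImp_of_le (hab : a ≤ b) : SImp a b = max (-a) b := if_pos hab

lemma SImp_of_lt (hba : b < a) : SImp a b = min (-a) b := if_neg hba.not_ge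

lemma SImp_self (a : ℤ) : SImp a a = |a| := by
  rw [SImp_of_le le_rfl, abs_eq_max_neg, max_comm]

end SImp

section Zodd

variable {m : ℕ} {a b : ℤ}

lemma Zodd_eq_Icc (m : ℕ) : Zodd m = Icc (-(m : ℤ)) m := rfl

lemma zero_mem_Zodd : (0 : ℤ) ∈ Zodd m := by
  simp only [Zodd_eq_Icc, mem_Icc]; omega

lemma Zodd_finite (m : ℕ) : (Zodd m).Finite := (Zodd_eq_Icc m) ▸ finite_Icc _ _

lemma neg_mem_Zodd (ha : a ∈ Zodd m) : -a ∈ Zodd m := by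
  simp only [Zodd_eq_Icc, mem_Icc] at *; omega

lemma SImp_mem_Zodd (ha : a ∈ Zodd m) (hb : b ∈ Zodd m) : SImp a b ∈ Zodd m := by
  simp only [Zodd_eq_Icc, mem_Icc, SImp] at *
  split <;> omega

lemma subalg_Zodd (m : ℕ) : Subalg (Zodd m) (Zodd m) := by
  refine ⟨⟨0, zero_mem_Zodd⟩, subset_rfl, fun a ha b hb =>
    ⟨?_, ?_, neg_mem_Zodd ha, SImp_mem_Zodd ha hb⟩⟩ <;>
  simp only [Zodd_eq_Icc, mem_Icc] at * <;> omega

lemma odd_of_zero_mem_ZS {k : ℕ} (h0 : (0 : ℤ) ∈ ZS k) : Odd k := by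
  rw [Nat.odd_iff]
  by_contra hk
  simp only [ZS, if_neg hk, Zeven] at h0
  exact h0.2 rfl

end Zodd

lemma Subalg.neg_mem {Z T : Set ℤ} {t : ℤ} (hT : Subalg Z T) (ht : t ∈ T) : -t ∈ T :=
  (hT.2.2 t ht t ht).2.2.1

namespace SHom

variable {S T Z : Set ℤ} {h : ℤ → ℤ} {a b : ℤ}

lemma map_neg (hh : SHom S T h) (ha : a ∈ S) : h (-a) = -h a :=
  (hh.2 a ha a ha).2.2.1

lemma map_zero (hh : SHom S T h) (h0 : (0 : ℤ) ∈ S) : h 0 = 0 := by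
  have := hh.map_neg h0
  rw [neg_zero] at this
  omega

lemma monotoneOn (hh : SHom S T h) : MonotoneOn h S := by
  intro a ha b hb hab
  have := (hh.2 a ha b hb).2.1
  rw [max_eq_right hab] at this
  omega

lemma eq_zero_of_map_eq (hh : SHom S T h) (hS : ∀ a ∈ S, ∀ b ∈ S, SImp a b ∈ S)
    (ha : a ∈ S) (hb : b ∈ S) (hne : a ≠ b) (heq : h a = h b) : h a = 0 := by
  wlog hab : a < b generalizing a b
  · exact heq ▸ this hb ha hne.symm heq.symm (lt_of_le_of_ne (not_lt.1 hab) hne.symm)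
  have hswap : SImp b a = -SImp a b := by
    rw [SImp_of_lt hab, SImp_of_le hab.le]
    omega
  have himp := (hh.2 b hb a ha).2.2.2
  rw [hswap, hh.map_neg (hS a ha b hb), (hh.2 a ha b hb).2.2.2, heq, SImp_self] at himp
  rw [heq]
  exact abs_eq_zero.1 (by omega)

lemma subalg_image (hS : Subalg Z S) (hh : SHom S T h) : Subalg T (h '' S) := by
  refine ⟨hS.1.image h, hh.1.image_subset, ?_⟩
  rintro _ ⟨a, ha, rfl⟩ _ ⟨b, hb, rfl⟩
  obtain ⟨hmin, hmax, hneg, himp⟩ := hS.2.2 a ha b hb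
  obtain ⟨h_min, h_max, h_neg, h_imp⟩ := hh.2 a ha b hb
  exact ⟨⟨_, hmin, h_min⟩, ⟨_, hmax, h_max⟩, ⟨_, hneg, h_neg⟩, ⟨_, himp, h_imp⟩⟩

lemma of_monotoneOn (hS : ∀ a ∈ S, -a ∈ S) (hmaps : MapsTo h S T) (hmono : MonotoneOn h S)
    (hodd : ∀ a ∈ S, h (-a) = -h a)
    (hinj : ∀ a ∈ S, ∀ b ∈ S, a ≠ b → h a = h b → h a = 0) : SHom S T h := by
  have hmin : ∀ a ∈ S, ∀ b ∈ S, h (min a b) = min (h a) (h b) := fun _ ha _ hb =>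
    hmono.map_min ha hb
  have hmax : ∀ a ∈ S, ∀ b ∈ S, h (max a b) = max (h a) (h b) := fun _ ha _ hb =>
    hmono.map_max ha hb
  refine ⟨hmaps, fun a ha b hb => ⟨hmin a ha b hb, hmax a ha b hb, hodd a ha, ?_⟩⟩
  rcases le_or_gt a b with hab | hba
  · rw [SImp_of_le hab, SImp_of_le (hmono ha hb hab), hmax _ (hS a ha) _ hb, hodd a ha]
  rw [SImp_of_lt hba, hmin _ (hS a ha) _ hb, hodd a ha]
  rcases (hmono hb ha hba.le).lt_or_eq with hlt | heq
  · rw [SImp_of_lt hlt]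
  · have hb0 := hinj b hb a ha hba.ne heq
    rw [← heq, hb0, SImp_self]
    simp

end SHom

namespace Sugihara

/-- For finite `T ∋ 0`, `nthLargest T j` is the `j`-th largest nonnegative element of `T`
(counting from `0`), and `0` once these are exhausted. -/
noncomputable def nthLargest (T : Set ℤ) : ℕ → ℤ
  | 0 => sSup T
  | j + 1 => if nthLargest T j ≤ 0 then 0 else sSup {t ∈ T | t < nthLargest T j}

noncomputable def collapse (T : Set ℤ) (m : ℕ) (a : ℤ) : ℤ :=
  a.sign * nthLargest T (m - |a|).toNat

section nthLargest

variable {T : Set ℤ} {j : ℕ}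

lemma nthLargest_succ_of_nonpos (hj : nthLargest T j ≤ 0) : nthLargest T (j + 1) = 0 :=
  if_pos hj

lemma nthLargest_succ_of_pos (hj : 0 < nthLargest T j) :
    nthLargest T (j + 1) = sSup {t ∈ T | t < nthLargest T j} :=
  if_neg hj.not_ge

variable (hfin : T.Finite) (h0 : (0 : ℤ) ∈ T)
include hfin h0

lemma nthLargest_succ_mem_of_pos (hj : 0 < nthLargest T j) :
    nthLargest T (j + 1) ∈ {t ∈ T | t < nthLargest T j} := by
  rw [nthLargest_succ_of_pos hj]
  exact Nonempty.csSup_mem (s := {t ∈ T | t < nthLargest T j}) ⟨0, h0, hj⟩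
    (hfin.subset (sep_subset _ _))

lemma nthLargest_mem (j : ℕ) : nthLargest T j ∈ T := by
  cases j with
  | zero => exact (nonempty_of_mem h0).csSup_mem hfin
  | succ j =>
    rcases le_or_gt (nthLargest T j) 0 with hj | hj
    · rw [nthLargest_succ_of_nonpos hj]; exact h0
    · exact (nthLargest_succ_mem_of_pos hfin h0 hj).1

lemma nthLargest_nonneg (j : ℕ) : 0 ≤ nthLargest T j := by
  cases j with
  | zero => exact le_csSup hfin.bddAbove h0
  | succ j =>
    rcases le_or_gt (nthLargest T j) 0 with hj | hj
    · rw [nthLargest_succ_of_nonpos hj]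
    · rw [nthLargest_succ_of_pos hj]
      exact le_csSup (hfin.subset (sep_subset _ _)).bddAbove ⟨h0, hj⟩

lemma nthLargest_succ_lt (hj : 0 < nthLargest T (j + 1)) :
    nthLargest T (j + 1) < nthLargest T j := by
  rcases le_or_gt (nthLargest T j) 0 with hj' | hj'
  · rw [nthLargest_succ_of_nonpos hj'] at hj
    exact (lt_irrefl 0 hj).elim
  · exact (nthLargest_succ_mem_of_pos hfin h0 hj').2

lemma antitone_nthLargest : Antitone (nthLargest T) := by
  refine antitone_nat_of_succ_le fun j => ?_
  rcases (nthLargest_nonneg hfin h0 (j + 1)).eq_or_lt with hj | hj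
  · rw [← hj]; exact nthLargest_nonneg hfin h0 j
  · exact (nthLargest_succ_lt hfin h0 hj).le

lemma nthLargest_eq_zero_of_eq {i : ℕ} (hij : i < j) (heq : nthLargest T i = nthLargest T j) :
    nthLargest T i = 0 := by
  by_contra hne
  have hpos : 0 < nthLargest T (i + 1) :=
    lt_of_lt_of_le (heq ▸ (nthLargest_nonneg hfin h0 i).lt_of_ne' hne)
      (antitone_nthLargest hfin h0 hij)
  have := antitone_nthLargest hfin h0 (show i + 1 ≤ j from hij)
  have := nthLargest_succ_lt hfin h0 hpos
  omega

lemma nthLargest_add_le {m : ℕ} (hsub : T ⊆ Zodd m) (hj : 0 < nthLargest T j) :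
    nthLargest T j + j ≤ m := by
  induction j with
  | zero => simpa using (hsub (nthLargest_mem hfin h0 0)).2
  | succ j ih =>
    have := ih (hj.trans (nthLargest_succ_lt hfin h0 hj))
    have := nthLargest_succ_lt hfin h0 hj
    push_cast
    omega

lemma exists_nthLargest_eq {m : ℕ} (hsub : T ⊆ Zodd m) {t : ℤ} (ht : t ∈ T)
    (htpos : 0 < t) : ∃ j, nthLargest T j = t := by
  by_contra! hne
  have hlt : ∀ j, t < nthLargest T j := by
    intro j
    refine lt_of_le_of_ne ?_ (hne j).symm
    induction j with
    | zero => exact le_csSup hfin.bddAbove ht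
    | succ j ih =>
      have ih := lt_of_le_of_ne ih (hne j).symm
      rw [nthLargest_succ_of_pos (htpos.trans ih)]
      exact le_csSup (hfin.subset (sep_subset _ _)).bddAbove ⟨ht, ih⟩
  have := nthLargest_add_le hfin h0 hsub (htpos.trans (hlt m))
  have := hlt m
  omega

end nthLargest

section collapse

variable {T : Set ℤ} {m : ℕ} {a b : ℤ}

lemma collapse_neg (a : ℤ) : collapse T m (-a) = -collapse T m a := by
  rw [collapse, collapse, Int.sign_neg, abs_neg, neg_mul]

@[simp]
lemma collapse_zero : collapse T m 0 = 0 := by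
  simp [collapse]

lemma collapse_of_pos (ha : 0 < a) : collapse T m a = nthLargest T (m - a).toNat := by
  rw [collapse, Int.sign_eq_one_of_pos ha, abs_of_pos ha, one_mul]

variable (hfin : T.Finite) (h0 : (0 : ℤ) ∈ T)
include hfin h0

lemma monotone_collapse : Monotone (collapse T m) := by
  refine monotone_of_odd_of_monotoneOn_nonneg collapse_neg fun a ha b _ hab => ?_
  rcases (mem_Ici.1 ha).eq_or_lt with rfl | ha
  · rcases hab.eq_or_lt with rfl | hb
    · exact le_rfl
    · rw [collapse_zero, collapse_of_pos hb]
      exact nthLargest_nonneg hfin h0 _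
  · rw [collapse_of_pos ha, collapse_of_pos (ha.trans_le hab)]
    exact antitone_nthLargest hfin h0 (by omega)

lemma collapse_mem (hneg : ∀ t ∈ T, -t ∈ T) (a : ℤ) : collapse T m a ∈ T := by
  rcases lt_trichotomy a 0 with ha | rfl | ha
  · rw [← neg_neg a, collapse_neg, collapse_of_pos (neg_pos.2 ha)]
    exact hneg _ (nthLargest_mem hfin h0 _)
  · rwa [collapse_zero]
  · rw [collapse_of_pos ha]
    exact nthLargest_mem hfin h0 _

lemma collapse_eq_zero_of_eq (ha : a ∈ Zodd m) (hb : b ∈ Zodd m) (hne : a ≠ b)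
    (heq : collapse T m a = collapse T m b) : collapse T m a = 0 := by
  wlog hab : a < b generalizing a b
  · exact heq ▸ this hb ha hne.symm heq.symm (lt_of_le_of_ne (not_lt.1 hab) hne.symm)
  have hpos : ∀ {a b : ℤ}, 0 < a → a < b → b ≤ m → collapse T m a = collapse T m b →
      collapse T m a = 0 := by
    intro a b ha hab hbm heq
    rw [collapse_of_pos ha, collapse_of_pos (ha.trans hab)] at heq
    rw [collapse_of_pos ha, heq]
    exact nthLargest_eq_zero_of_eq hfin h0 (by omega) heq.symm
  have hmono := monotone_collapse (m := m) hfin h0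
  rcases lt_or_ge 0 a with ha0 | ha0
  · exact hpos ha0 hab hb.2 heq
  rcases le_or_gt 0 b with hb0 | hb0
  · have := hmono ha0
    have := hmono hb0
    rw [collapse_zero] at *
    omega
  · have := hpos (neg_pos.2 hb0) (neg_lt_neg hab) (by linarith [ha.1])
      (by rw [collapse_neg, collapse_neg, heq])
    rw [collapse_neg] at this
    omega

end collapse

lemma image_collapse {T : Set ℤ} {m : ℕ} (hT : Subalg (Zodd m) T) (h0 : (0 : ℤ) ∈ T) :
    collapse T m '' Zodd m = T := by
  have hfin := (Zodd_finite m).subset hT.2.1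
  have hneg : ∀ t ∈ T, -t ∈ T := fun _ => hT.neg_mem
  refine (image_subset_iff.2 fun a _ => collapse_mem hfin h0 hneg a).antisymm ?_
  have hpos : ∀ t ∈ T, 0 < t → t ∈ collapse T m '' Zodd m := by
    intro t ht htpos
    obtain ⟨j, rfl⟩ := exists_nthLargest_eq hfin h0 hT.2.1 ht htpos
    have := nthLargest_add_le hfin h0 hT.2.1 htpos
    refine ⟨m - j, by simp only [Zodd_eq_Icc, mem_Icc]; omega, ?_⟩
    rw [collapse_of_pos (by omega)]
    congr
    omega
  intro t ht
  rcases lt_trichotomy t 0 with htneg | rfl | htpos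
  · obtain ⟨a, ha, hat⟩ := hpos (-t) (hneg t ht) (neg_pos.2 htneg)
    exact ⟨-a, neg_mem_Zodd ha, by simp only [collapse_neg, hat, neg_neg]⟩
  · exact ⟨0, zero_mem_Zodd, collapse_zero⟩
  · exact hpos t ht htpos

lemma shom_collapse {T : Set ℤ} {m : ℕ} (hT : Subalg (Zodd m) T) (h0 : (0 : ℤ) ∈ T) :
    SHom (Zodd m) (Zodd m) (collapse T m) := by
  have hfin := (Zodd_finite m).subset hT.2.1
  have hneg : ∀ t ∈ T, -t ∈ T := fun _ => hT.neg_mem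
  exact SHom.of_monotoneOn (fun a ha => neg_mem_Zodd ha)
    (fun a _ => hT.2.1 (collapse_mem hfin h0 hneg a)) ((monotone_collapse hfin h0).monotoneOn _)
    (fun a _ => collapse_neg a) fun _ ha _ hb => collapse_eq_zero_of_eq hfin h0 ha hb

end Sugihara

open Sugihara

namespace SHom

variable {T : Set ℤ} {m : ℕ} {h : ℤ → ℤ}

lemma map_sub_eq_nthLargest (hh : SHom (Zodd m) T h) {j : ℕ} (hj : j ≤ m) :
    h (m - j) = nthLargest (h '' Zodd m) j := by
  have hmem : ∀ {a : ℤ}, 0 ≤ a → a ≤ m → a ∈ Zodd m := fun _ _ => by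
    simp only [Zodd_eq_Icc, mem_Icc]; omega
  have hmono := hh.monotoneOn
  induction j with
  | zero =>
    symm
    refine IsGreatest.csSup_eq ⟨mem_image_of_mem h (hmem (by omega) (by omega)), ?_⟩
    rintro _ ⟨c, hc, rfl⟩
    exact hmono hc (hmem (by omega) (by omega)) (by simpa using hc.2)
  | succ j ih =>
    set a : ℤ := (m : ℤ) - (j + 1 : ℕ) with ha_def
    have ih : h (a + 1) = nthLargest (h '' Zodd m) j := by
      rw [← ih (by omega)]
      congr 1
      omega
    have ha : a ∈ Zodd m := hmem (by omega) (by omega)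
    have ha1_mem : a + 1 ∈ Zodd m := hmem (by omega) (by omega)
    have hle : h a ≤ h (a + 1) := hmono ha ha1_mem (by omega)
    have hnn : 0 ≤ h a := hh.map_zero zero_mem_Zodd ▸ hmono zero_mem_Zodd ha (by omega)
    rcases le_or_gt (h (a + 1)) 0 with hpos | hpos
    · rw [nthLargest_succ_of_nonpos (ih ▸ hpos)]
      omega
    rw [nthLargest_succ_of_pos (ih ▸ hpos), ← ih]
    symm
    refine IsGreatest.csSup_eq ⟨⟨mem_image_of_mem h ha, hle.lt_of_ne fun heq => ?_⟩, ?_⟩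
    · have := hh.eq_zero_of_map_eq (fun _ ha _ hb => SImp_mem_Zodd ha hb)
        ha ha1_mem (by omega) heq
      omega
    · rintro _ ⟨⟨c, hc, rfl⟩, hlt⟩
      refine hmono hc ha ?_
      by_contra! hca
      exact (hmono ha1_mem hc (by omega)).not_gt hlt

lemma eqOn_collapse_image (hh : SHom (Zodd m) T h) :
    EqOn h (collapse (h '' Zodd m) m) (Zodd m) := by
  have hpos : ∀ a ∈ Zodd m, 0 < a → h a = collapse (h '' Zodd m) m a := by
    intro a ha ha0
    rw [collapse_of_pos ha0, ← hh.map_sub_eq_nthLargest (by omega)]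
    congr
    have := ha.2
    omega
  intro a ha
  rcases lt_trichotomy a 0 with ha0 | rfl | ha0
  · rw [← neg_neg a, hh.map_neg (neg_mem_Zodd ha), collapse_neg,
      hpos _ (neg_mem_Zodd ha) (by omega)]
  · rw [hh.map_zero zero_mem_Zodd, collapse_zero]
  · exact hpos a ha ha0

end SHom

theorem stmt3_general (m k : ℕ) (h : ℤ → ℤ)
    (hh : SHom (Zodd m) (ZS k) h) :
    Odd k ∧ h 0 = 0 ∧
      (∀ a ∈ Zodd m, ∀ b ∈ Zodd m, a ≠ b → h a = h b → h a = 0) ∧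
      (∀ h₁ h₂ : ℤ → ℤ, SHom (Zodd m) (Zodd m) h₁ → SHom (Zodd m) (Zodd m) h₂ →
        (Set.EqOn h₁ h₂ (Zodd m) ↔ h₁ '' Zodd m = h₂ '' Zodd m)) ∧
      (∀ e : ℤ → ℤ, SHom (Zodd m) (Zodd m) e →
        Subalg (Zodd m) (e '' Zodd m) ∧ (0 : ℤ) ∈ e '' Zodd m) ∧
      (∀ T : Set ℤ, Subalg (Zodd m) T → (0 : ℤ) ∈ T →
        ∃ e : ℤ → ℤ, SHom (Zodd m) (Zodd m) e ∧ e '' Zodd m = T) := by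
  have h0 : h 0 = 0 := hh.map_zero zero_mem_Zodd
  refine ⟨odd_of_zero_mem_ZS (h0 ▸ hh.1 zero_mem_Zodd), h0, fun a ha b hb =>
    hh.eq_zero_of_map_eq (fun _ ha _ hb => SImp_mem_Zodd ha hb) ha hb,
    fun h₁ h₂ hh₁ hh₂ => ⟨EqOn.image_eq, fun him => ?_⟩,
    fun e he => ⟨he.subalg_image (subalg_Zodd m), 0, zero_mem_Zodd, he.map_zero zero_mem_Zodd⟩,
    fun T hT h0T => ⟨collapse T m, shom_collapse hT h0T, image_collapse hT h0T⟩⟩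
  exact hh₁.eqOn_collapse_image.trans (him ▸ hh₂.eqOn_collapse_image.symm)

theorem stmt3 (m k : ℕ) (hm : 1 ≤ m) (hk : 1 ≤ k) (h : ℤ → ℤ)
    (hh : SHom (Zodd m) (ZS k) h) :
    Odd k ∧ h 0 = 0 ∧
      (∀ a ∈ Zodd m, ∀ b ∈ Zodd m, a ≠ b → h a = h b → h a = 0) ∧
      (∀ h₁ h₂ : ℤ → ℤ, SHom (Zodd m) (Zodd m) h₁ → SHom (Zodd m) (Zodd m) h₂ →
        (Set.EqOn h₁ h₂ (Zodd m) ↔ h₁ '' Zodd m = h₂ '' Zodd m)) ∧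
      (∀ e : ℤ → ℤ, SHom (Zodd m) (Zodd m) e →
        Subalg (Zodd m) (e '' Zodd m) ∧ (0 : ℤ) ∈ e '' Zodd m) ∧
      (∀ T : Set ℤ, Subalg (Zodd m) T → (0 : ℤ) ∈ T →
        ∃ e : ℤ → ℤ, SHom (Zodd m) (Zodd m) e ∧ e '' Zodd m = T) :=
  stmt3_general m k h hh
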